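/- arXiv:1202.3428 — 4 statements merged into one kernel-verified Lean document; each statement's English description precedes it below -/
import Mathlib

section
/- Let N be coprime to b>1 and let d1, d2 be divisors of |b|_N with d1 | d2. If N has the Midy property for b and d1, then N has the Midy property for b and d2. -/
/-- The multiplicative order of `b` modulo `N`. -/
noncomputable def ord (b N : ℕ) : ℕ := orderOf (b : ZMod N)

/-- `N` has the Midy property for base `b` and `d` (where `|b|_N = k·d`):
`ν_p(N) ≤ ν_p(d)` for all primes `p` dividing `gcd(b^k − 1, N)`. -/
def HasMidy (b N d : ℕ) : Prop :=
  ∀ p : ℕ, p.Prime → p ∣ Nat.gcd (b ^ (ord b N / d) - 1) N →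
    padicValNat p N ≤ padicValNat p d

/-! If `d₁ ∣ d₂ ∣ |b|_N`, then `|b|_N / d₂ ∣ |b|_N / d₁`, so `b^(|b|_N / d₂) - 1` divides
`b^(|b|_N / d₁) - 1` and every prime to be checked for `d₂` was already checked for `d₁`;
moreover `ν_p(d₁) ≤ ν_p(d₂)`. -/

lemma padicValNat_le_of_dvd {p a b : ℕ} (hb : b ≠ 0) (hab : a ∣ b) :
    padicValNat p a ≤ padicValNat p b := by
  rcases eq_or_ne p 1 with rfl | hp
  · simp
  · exact (padicValNat_dvd_iff_le_of_ne_one hp hb).mp (pow_padicValNat_dvd.trans hab)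

-- `(ZMod N)ˣ` is finite even for `N = 0`, where `ZMod 0 = ℤ`.
lemma ord_pos_of_coprime {b N : ℕ} (h : Nat.Coprime N b) : 0 < ord b N :=
  ((ZMod.isUnit_iff_coprime b N).mpr h.symm).isOfFinOrder.orderOf_pos

theorem HasMidy.of_dvd {b N d₁ d₂ : ℕ} (hm : HasMidy b N d₁) (h₁₂ : d₁ ∣ d₂)
    (h₂ : d₂ ∣ ord b N) (hd₂ : d₂ ≠ 0) : HasMidy b N d₂ := by
  intro p hp hpdvd
  have hpow : b ^ (ord b N / d₂) - 1 ∣ b ^ (ord b N / d₁) - 1 :=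
    Nat.pow_sub_one_dvd_pow_sub_one b (Nat.div_dvd_div_left h₂ h₁₂)
  calc padicValNat p N ≤ padicValNat p d₁ :=
        hm p hp (hpdvd.trans (Nat.gcd_dvd_gcd_of_dvd_left N hpow))
    _ ≤ padicValNat p d₂ := padicValNat_le_of_dvd hd₂ h₁₂

theorem stmt1_general (b N d₁ d₂ : ℕ) (hco : Nat.Coprime N b)
    (h₂ : d₂ ∣ ord b N) (h₁₂ : d₁ ∣ d₂)
    (hm : HasMidy b N d₁) : HasMidy b N d₂ :=
  hm.of_dvd h₁₂ h₂ (ne_zero_of_dvd_ne_zero (ord_pos_of_coprime hco).ne' h₂)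

theorem stmt1 (b N d₁ d₂ : ℕ) (hb : 1 < b) (hN : 0 < N) (hco : Nat.Coprime N b)
    (hd₁ : 1 < d₁) (h₁ : d₁ ∣ ord b N) (h₂ : d₂ ∣ ord b N) (h₁₂ : d₁ ∣ d₂)
    (hm : HasMidy b N d₁) : HasMidy b N d₂ :=
  stmt1_general b N d₁ d₂ hco h₂ h₁₂ hm
end

section
/- Let N be coprime to b>1 and q a prime divisor of |b|_N with gcd(N,q)=1. Then N has the Midy property for b and q if and only if ν_q(|b|_p) = ν_q(|b|_N) for every prime p dividing N. -/
theorem padicValNat_eq_iff_not_mul_dvd {p d e : ℕ} [Fact p.Prime] (he : e ≠ 0) (hde : d ∣ e) :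
    padicValNat p d = padicValNat p e ↔ ¬ p * d ∣ e := by
  obtain ⟨c, rfl⟩ := hde
  have hd : d ≠ 0 := left_ne_zero_of_mul he
  have hc : c ≠ 0 := right_ne_zero_of_mul he
  rw [padicValNat.mul hd hc, mul_comm p, mul_dvd_mul_iff_left hd, dvd_iff_padicValNat_ne_zero hc]
  omega

theorem ord_pos {b N : ℕ} (hN : 0 < N) (hco : N.Coprime b) : 0 < ord b N := by
  have : NeZero N := ⟨hN.ne'⟩
  exact ((ZMod.isUnit_iff_coprime b N).mpr hco.symm).isOfFinOrder.orderOf_pos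

theorem ord_dvd_ord_of_dvd (b : ℕ) {m n : ℕ} (h : m ∣ n) : ord b m ∣ ord b n := by
  simpa [ord] using orderOf_map_dvd (ZMod.castHom h (ZMod m)).toMonoidHom (b : ZMod n)

theorem dvd_pow_sub_one_iff_ord_dvd {b : ℕ} (n k : ℕ) (hb : 0 < b) :
    n ∣ b ^ k - 1 ↔ ord b n ∣ k := by
  rw [ord, orderOf_dvd_iff_pow_eq_one, ← ZMod.natCast_eq_zero_iff,
    Nat.cast_sub (Nat.one_le_pow _ _ hb), Nat.cast_pow, Nat.cast_one, sub_eq_zero]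

theorem hasMidy_iff_of_coprime {b N d : ℕ} (hN : N ≠ 0) (hNd : N.Coprime d) :
    HasMidy b N d ↔ ∀ p : ℕ, p.Prime → p ∣ N → ¬ p ∣ b ^ (ord b N / d) - 1 := by
  refine forall₂_congr fun p hp => ?_
  have : Fact p.Prime := ⟨hp⟩
  rw [Nat.dvd_gcd_iff]
  by_cases hpN : p ∣ N
  · have hvN : padicValNat p N ≠ 0 := (dvd_iff_padicValNat_ne_zero hN).mp hpN
    have hvd : padicValNat p d = 0 :=
      padicValNat.eq_zero_of_not_dvd (hp.coprime_iff_not_dvd.mp (hNd.coprime_dvd_left hpN))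
    simp only [hpN, and_true, forall_const, hvd, nonpos_iff_eq_zero, hvN, imp_false]
  · simp [hpN]

theorem stmt2 (b N q : ℕ) (hb : 1 < b) (hN : 0 < N) (hco : Nat.Coprime N b)
    (hq : q.Prime) (hqo : q ∣ ord b N) (hqN : Nat.gcd N q = 1) :
    HasMidy b N q ↔
      ∀ p : ℕ, p.Prime → p ∣ N →
        padicValNat q (ord b p) = padicValNat q (ord b N) := by
  have : Fact q.Prime := ⟨hq⟩
  rw [hasMidy_iff_of_coprime hN.ne' hqN]
  refine forall₃_congr fun p _ hpN => ?_
  rw [dvd_pow_sub_one_iff_ord_dvd p _ (zero_lt_one.trans hb), Nat.dvd_div_iff_mul_dvd hqo,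
    padicValNat_eq_iff_not_mul_dvd (ord_pos hN hco).ne' (ord_dvd_ord_of_dvd b hpN)]
end

section
/- An odd composite integer N coprime to b is a strong pseudoprime to base b if and only if N is a Fermat pseudoprime to base b and there exists a non-negative integer k such that ν_2(|b|_{p^{ν_p(N)}}) = ν_2(|b|_p) = k for every prime p dividing N. -/
/-- The strong pseudoprimality *condition*: writing `N − 1 = 2^r·s` with `s` odd,
`b^s ≡ 1 (mod N)` or `b^{2^i·s} ≡ −1 (mod N)` for some `0 ≤ i < r`. -/
def StrongCond (b N : ℕ) : Prop :=
  b ^ ((N - 1) / 2 ^ padicValNat 2 (N - 1)) ≡ 1 [MOD N] ∨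
    ∃ i < padicValNat 2 (N - 1),
      (b : ZMod N) ^ (2 ^ i * ((N - 1) / 2 ^ padicValNat 2 (N - 1))) = -1

theorem Nat.dvd_two_pow_mul_iff_padicValNat_le {d r j s : ℕ} (hs : Odd s)
    (h : d ∣ 2 ^ r * s) : d ∣ 2 ^ j * s ↔ padicValNat 2 d ≤ j := by
  have hd : d ≠ 0 := by rintro rfl; simp [hs.pos.ne'] at h
  have hs2 : Nat.Coprime 2 s := Nat.coprime_two_left.2 hs
  have hodd : (d / 2 ^ padicValNat 2 d).Coprime 2 :=
    Nat.coprime_two_right.2 <|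
      Nat.odd_iff.2 (Nat.two_dvd_ne_zero.1 (Nat.not_dvd_ordCompl Nat.prime_two hd))
  constructor
  · intro hj
    exact (Nat.pow_dvd_pow_iff_le_right one_lt_two).1
      ((hs2.pow_left _).dvd_of_dvd_mul_right ((Nat.ordProj_dvd d 2).trans hj))
  · intro hle
    rw [← Nat.ordProj_mul_ordCompl_eq_self d 2]
    exact mul_dvd_mul (pow_dvd_pow 2 hle)
      ((hodd.pow_right r).dvd_of_dvd_mul_left ((Nat.ordCompl_dvd d 2).trans h))

section TwoPowOrder

variable {r s : ℕ}

theorem pow_two_pow_mul_eq_one_iff {M : Type*} [Monoid M] {x : M} (hs : Odd s)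
    (hx : x ^ (2 ^ r * s) = 1) {j : ℕ} :
    x ^ (2 ^ j * s) = 1 ↔ padicValNat 2 (orderOf x) ≤ j := by
  rw [← orderOf_dvd_iff_pow_eq_one]
  exact Nat.dvd_two_pow_mul_iff_padicValNat_le hs (orderOf_dvd_of_pow_eq_one hx)

theorem padicValNat_orderOf_eq_zero_of_pow_eq_one {M : Type*} [Monoid M] {x : M}
    (hs : Odd s) (hx : x ^ s = 1) : padicValNat 2 (orderOf x) = 0 := by
  have hx' : x ^ (2 ^ 0 * s) = 1 := by rwa [pow_zero, one_mul]
  exact Nat.le_zero.1 ((pow_two_pow_mul_eq_one_iff hs hx').1 hx')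

variable {R : Type*} [Ring R] {x : R}

theorem padicValNat_orderOf_eq_of_pow_eq_neg_one (hR : (-1 : R) ≠ 1) (hs : Odd s) {i : ℕ}
    (hx : x ^ (2 ^ i * s) = -1) : padicValNat 2 (orderOf x) = i + 1 := by
  have hsq : x ^ (2 ^ (i + 1) * s) = 1 := by
    rw [pow_succ, mul_right_comm, pow_mul, hx, neg_one_sq]
  have hle := (pow_two_pow_mul_eq_one_iff hs hsq).1 hsq
  have hgt : ¬ padicValNat 2 (orderOf x) ≤ i := by
    rwa [← pow_two_pow_mul_eq_one_iff hs hsq, hx]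
  omega

theorem pow_two_pow_mul_eq_neg_one (hroots : ∀ y : R, y ^ 2 = 1 → y = 1 ∨ y = -1)
    (hs : Odd s) (hx : x ^ (2 ^ r * s) = 1) {k : ℕ}
    (hk : padicValNat 2 (orderOf x) = k + 1) : x ^ (2 ^ k * s) = -1 := by
  have hsq : (x ^ (2 ^ k * s)) ^ 2 = 1 := by
    rw [← pow_mul, mul_right_comm, ← pow_succ, pow_two_pow_mul_eq_one_iff hs hx, hk]
  have hne : x ^ (2 ^ k * s) ≠ 1 := by
    rw [Ne, pow_two_pow_mul_eq_one_iff hs hx, hk]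
    omega
  exact (hroots _ hsq).resolve_left hne

theorem pow_two_pow_mul_eq_one_of_pow_eq_one_or_neg_one
    (h : x ^ s = 1 ∨ ∃ i < r, x ^ (2 ^ i * s) = -1) : x ^ (2 ^ r * s) = 1 := by
  rcases h with h | ⟨i, hi, h⟩
  · rw [mul_comm, pow_mul, h, one_pow]
  · obtain ⟨j, rfl⟩ := Nat.exists_eq_add_of_lt hi
    rw [show 2 ^ (i + j + 1) * s = 2 ^ i * s * 2 * 2 ^ j by ring, pow_mul, pow_mul, h,
      neg_one_sq, one_pow]

end TwoPowOrder

theorem ZMod.eq_one_or_eq_neg_one_of_sq_eq_one {p e : ℕ} (hp : p.Prime) (hp2 : p ≠ 2)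
    {x : ZMod (p ^ e)} (hx : x ^ 2 = 1) : x = 1 ∨ x = -1 := by
  obtain ⟨y, rfl⟩ := ZMod.intCast_surjective x
  have hpz : Prime (p : ℤ) := Nat.prime_iff_prime_int.mp hp
  have hdvd : (p : ℤ) ^ e ∣ (y - 1) * (y + 1) := by
    have : (((y - 1) * (y + 1) : ℤ) : ZMod (p ^ e)) = 0 := by
      push_cast
      linear_combination hx
    exact_mod_cast (ZMod.intCast_zmod_eq_zero_iff_dvd _ _).1 this
  have hp_two : ¬ (p : ℤ) ∣ 2 := by
    exact_mod_cast fun h => hp2 ((Nat.prime_dvd_prime_iff_eq hp Nat.prime_two).1 h)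
  by_cases h1 : (p : ℤ) ∣ y - 1
  · have h2 : ¬ (p : ℤ) ∣ y + 1 := fun h2 => hp_two (by simpa using dvd_sub h2 h1)
    left
    have := (ZMod.intCast_zmod_eq_zero_iff_dvd (y - 1) (p ^ e)).2
      (by exact_mod_cast hpz.pow_dvd_of_dvd_mul_right e h2 hdvd)
    push_cast at this
    linear_combination this
  · right
    have := (ZMod.intCast_zmod_eq_zero_iff_dvd (y + 1) (p ^ e)).2
      (by exact_mod_cast hpz.pow_dvd_of_dvd_mul_left e h1 hdvd)
    push_cast at this
    linear_combination this

theorem ZMod.intCast_eq_of_forall_primePow {N : ℕ} (hN : N ≠ 0) {x y : ℤ}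
    (h : ∀ p, p.Prime → p ∣ N → (x : ZMod (p ^ N.factorization p)) = y) :
    (x : ZMod N) = y := by
  simp only [ZMod.intCast_eq_intCast_iff_dvd_sub, Int.natCast_dvd] at h ⊢
  rw [Nat.dvd_iff_prime_pow_dvd_dvd]
  intro p k hp hpk
  rcases k.eq_zero_or_pos with rfl | hk
  · simp
  have hpN : p ∣ N := (dvd_pow_self p hk.ne').trans hpk
  exact (Nat.pow_dvd_pow p ((hp.pow_dvd_iff_le_factorization hN).1 hpk)).trans (h p hp hpN)

theorem Nat.Prime.two_lt_of_dvd_odd {p N : ℕ} (hp : p.Prime) (hodd : Odd N) (hpN : p ∣ N) :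
    2 < p := by
  refine hp.two_le.lt_of_ne' ?_
  rintro rfl
  exact Nat.not_even_iff_odd.2 hodd (even_iff_two_dvd.2 hpN)

section Pseudoprime

variable {b N s : ℕ}

theorem ZMod.natCast_pow_eq_intCast_of_dvd {m e : ℕ} {c : ℤ} (hm : m ∣ N)
    (h : (b : ZMod N) ^ e = c) : (b : ZMod m) ^ e = c := by
  have := congrArg (ZMod.castHom hm (ZMod m)) h
  rwa [map_pow, map_natCast, map_intCast] at this

theorem exists_padicValNat_ord_eq (hs : Odd s)
    (h : (b : ZMod N) ^ s = 1 ∨ ∃ i, (b : ZMod N) ^ (2 ^ i * s) = -1) :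
    ∃ k, ∀ m, m ∣ N → 2 < m → padicValNat 2 (ord b m) = k := by
  rcases h with h | ⟨i, h⟩
  · refine ⟨0, fun m hm _ => padicValNat_orderOf_eq_zero_of_pow_eq_one hs ?_⟩
    simpa using ZMod.natCast_pow_eq_intCast_of_dvd (c := 1) hm (by simpa using h)
  · refine ⟨i + 1, fun m hm hm2 => ?_⟩
    have : Fact (2 < m) := ⟨hm2⟩
    refine padicValNat_orderOf_eq_of_pow_eq_neg_one ZMod.neg_one_ne_one hs ?_
    simpa using ZMod.natCast_pow_eq_intCast_of_dvd (c := -1) hm (by simpa using h)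

theorem pow_eq_one_or_pow_eq_neg_one_of_padicValNat_ord_eq {r k : ℕ} (hN : 1 < N)
    (hodd : Odd N) (hs : Odd s) (hferm : (b : ZMod N) ^ (2 ^ r * s) = 1)
    (hk : ∀ p, p.Prime → p ∣ N → padicValNat 2 (ord b (p ^ N.factorization p)) = k) :
    (b : ZMod N) ^ s = 1 ∨ ∃ i < r, (b : ZMod N) ^ (2 ^ i * s) = -1 := by
  have hferm_p (p : ℕ) : (b : ZMod (p ^ N.factorization p)) ^ (2 ^ r * s) = 1 := by
    simpa using
      ZMod.natCast_pow_eq_intCast_of_dvd (c := 1) (Nat.ordProj_dvd N p) (by simpa using hferm)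
  rcases k with _ | k
  · left
    simpa using ZMod.intCast_eq_of_forall_primePow (x := b ^ s) (y := 1) (by omega)
      fun p hp hpN => by
        simpa using (pow_two_pow_mul_eq_one_iff (j := 0) hs (hferm_p p)).2
          (hk p hp hpN).le
  · right
    obtain ⟨q, hq, hqN⟩ := Nat.exists_prime_and_dvd hN.ne'
    have hkr : k < r := by
      have := (pow_two_pow_mul_eq_one_iff hs (hferm_p q)).1 (hferm_p q)
      rw [← ord, hk q hq hqN] at this
      omega
    refine ⟨k, hkr, ?_⟩
    simpa using ZMod.intCast_eq_of_forall_primePow (x := b ^ (2 ^ k * s)) (y := -1) (by omega)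
      fun p hp hpN => by
        simpa using pow_two_pow_mul_eq_neg_one
          (fun _ => ZMod.eq_one_or_eq_neg_one_of_sq_eq_one hp (hp.two_lt_of_dvd_odd hodd hpN).ne')
          hs (hferm_p p) (hk p hp hpN)

end Pseudoprime

theorem stmt4_general (b N : ℕ) (hodd : Odd N) (hN : 1 < N) :
    StrongCond b N ↔
      (b ^ (N - 1) ≡ 1 [MOD N] ∧
        ∃ k : ℕ, ∀ p : ℕ, p.Prime → p ∣ N →
          padicValNat 2 (ord b (p ^ (N.factorization p))) = k ∧
            padicValNat 2 (ord b p) = k) := by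
  simp only [StrongCond, ← ZMod.natCast_eq_natCast_iff, Nat.cast_pow, Nat.cast_one]
  set r := padicValNat 2 (N - 1)
  set s := (N - 1) / 2 ^ r
  have hrs : N - 1 = 2 ^ r * s := (Nat.ordProj_mul_ordCompl_eq_self (N - 1) 2).symm
  have hs : Odd s :=
    Nat.odd_iff.2 (Nat.two_dvd_ne_zero.1 (Nat.not_dvd_ordCompl Nat.prime_two (by omega)))
  rw [hrs]
  constructor
  · intro h
    obtain ⟨k, hk⟩ :=
      exists_padicValNat_ord_eq hs (h.imp_right fun ⟨i, _, hi⟩ => ⟨i, hi⟩)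
    refine ⟨pow_two_pow_mul_eq_one_of_pow_eq_one_or_neg_one h, k, fun p hp hpN => ?_⟩
    have h2p := hp.two_lt_of_dvd_odd hodd hpN
    exact ⟨hk _ (Nat.ordProj_dvd N p) (h2p.trans_le (Nat.le_self_pow
      (hp.factorization_pos_of_dvd (by omega) hpN).ne' p)), hk p hpN h2p⟩
  · rintro ⟨hferm, k, hk⟩
    exact pow_eq_one_or_pow_eq_neg_one_of_padicValNat_ord_eq hN hodd hs hferm
      fun p hp hpN => (hk p hp hpN).1

theorem stmt4 (b N : ℕ) (hodd : Odd N) (hN : 1 < N) (hcomp : ¬ N.Prime)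
    (hco : Nat.Coprime b N) :
    StrongCond b N ↔
      (b ^ (N - 1) ≡ 1 [MOD N] ∧
        ∃ k : ℕ, ∀ p : ℕ, p.Prime → p ∣ N →
          padicValNat 2 (ord b (p ^ (N.factorization p))) = k ∧
            padicValNat 2 (ord b p) = k) :=
  stmt4_general b N hodd hN
end

section
/- If N is a positive integer coprime to b>1 such that N has the Midy property for b and every divisor d>1 of |b|_N, then gcd(N, |b|_N) is either 1 or a prime. -/
/-!
Suppose `g = gcd(N, |b|_N)` is neither `1` nor prime, and pick primes `p ≤ q` with `p q ∣ g`.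
Since `|b|_p` divides `p - 1`, it is prime to `q`, and as it also divides `|b|_N` it divides
`|b|_N / q`; so `p ∣ b^(|b|_N / q) - 1`. The Midy property for `d = q` then gives
`ν_p(N) ≤ ν_p(q)`, contradicting `p q ∣ N`.
-/

theorem Nat.exists_prime_le_prime_mul_dvd {n : ℕ} (hn : n ≠ 1) (hnp : ¬ n.Prime) :
    ∃ p q, p.Prime ∧ q.Prime ∧ p ≤ q ∧ p * q ∣ n := by
  have hp := Nat.minFac_prime hn
  have hpn := Nat.minFac_dvd n
  have hm : n / n.minFac ≠ 1 := fun h1 => by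
    rw [← Nat.mul_div_cancel' hpn, h1, mul_one] at hnp
    exact hnp hp
  refine ⟨n.minFac, (n / n.minFac).minFac, hp, Nat.minFac_prime hm, ?_, ?_⟩
  · exact Nat.minFac_le_of_dvd (Nat.minFac_prime hm).two_le
      ((Nat.minFac_dvd _).trans (Nat.div_dvd_of_dvd hpn))
  · conv_rhs => rw [← Nat.mul_div_cancel' hpn]
    exact Nat.mul_dvd_mul_left _ (Nat.minFac_dvd _)

theorem padicValNat_lt_of_mul_dvd {p q n : ℕ} [Fact p.Prime] (hn : n ≠ 0) (h : p * q ∣ n) :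
    padicValNat p q < padicValNat p n := by
  rw [← Nat.succ_le_iff, ← padicValNat_dvd_iff_le hn, pow_succ']
  exact (Nat.mul_dvd_mul_left p pow_padicValNat_dvd).trans h

theorem dvd_pow_sub_one_of_natCast_pow_eq_one {p b k : ℕ} (h : (b : ZMod p) ^ k = 1) :
    p ∣ b ^ k - 1 := by
  rcases Nat.eq_zero_or_pos (b ^ k) with h0 | hpos
  · simp [h0]
  · rw [← ZMod.natCast_eq_zero_iff, Nat.cast_sub hpos, Nat.cast_pow, h, Nat.cast_one, sub_self]

theorem orderOf_natCast_zmod_dvd_ord {p N : ℕ} (b : ℕ) (hpN : p ∣ N) :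
    orderOf (b : ZMod p) ∣ ord b N := by
  simpa [ord] using orderOf_map_dvd (ZMod.castHom hpN (ZMod p)).toMonoidHom (b : ZMod N)

theorem dvd_pow_ord_div_sub_one {b N p q : ℕ} [Fact p.Prime] (hpN : p ∣ N) (hpb : ¬ p ∣ b)
    (hq : q.Prime) (hqe : q ∣ ord b N) (hpq : p ≤ q) :
    p ∣ b ^ (ord b N / q) - 1 := by
  apply dvd_pow_sub_one_of_natCast_pow_eq_one
  rw [← orderOf_dvd_iff_pow_eq_one]
  have hb : (b : ZMod p) ≠ 0 := by rwa [Ne, ZMod.natCast_eq_zero_iff]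
  have hcop : Nat.Coprime (orderOf (b : ZMod p)) q := by
    refine (hq.coprime_iff_not_dvd.mpr fun hdvd => ?_).symm
    have hp := (Fact.out : p.Prime).two_le
    have := Nat.le_of_dvd (by omega) (hdvd.trans (ZMod.orderOf_dvd_card_sub_one hb))
    omega
  apply hcop.dvd_of_dvd_mul_left
  rw [Nat.mul_div_cancel' hqe]
  exact orderOf_natCast_zmod_dvd_ord b hpN

theorem stmt5_general (b N : ℕ) (hN : 0 < N) (hco : Nat.Coprime N b)
    (h : ∀ d : ℕ, 1 < d → d ∣ ord b N → HasMidy b N d) :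
    Nat.gcd N (ord b N) = 1 ∨ (Nat.gcd N (ord b N)).Prime := by
  by_contra! hg
  obtain ⟨p, q, hp, hq, hpq, hpqg⟩ := Nat.exists_prime_le_prime_mul_dvd hg.1 hg.2
  have := Fact.mk hp
  have hpqN : p * q ∣ N := hpqg.trans (Nat.gcd_dvd_left _ _)
  have hpN : p ∣ N := (dvd_mul_right p q).trans hpqN
  have hqe : q ∣ ord b N := (dvd_mul_left q p).trans (hpqg.trans (Nat.gcd_dvd_right _ _))
  have hpb : ¬ p ∣ b := fun hpb => hp.one_lt.ne' (Nat.eq_one_of_dvd_coprimes hco hpN hpb)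
  have hmidy := h q hq.one_lt hqe p hp
    (Nat.dvd_gcd (dvd_pow_ord_div_sub_one hpN hpb hq hqe hpq) hpN)
  exact (padicValNat_lt_of_mul_dvd hN.ne' hpqN).not_ge hmidy

theorem stmt5 (b N : ℕ) (hb : 1 < b) (hN : 0 < N) (hco : Nat.Coprime N b)
    (h : ∀ d : ℕ, 1 < d → d ∣ ord b N → HasMidy b N d) :
    Nat.gcd N (ord b N) = 1 ∨ (Nat.gcd N (ord b N)).Prime :=
  stmt5_general b N hN hco h
end
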